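/- Let m ≥ 1 be an integer, β ∈ ℝ, and define f : ℝ → ℂ by f(t) = Σ_{k=1}^{m} binom(m,k) (-1)^{m-k} k^{-β - it}. Then there exist constants C, ε, δ > 0 such that every interval I ⊆ ℝ of length |I| ≥ C contains a subinterval J ⊆ I of length |J| ≥ δ with |f(t)| ≥ ε for all t ∈ J. Consequently, there exist ε' > 0, δ > 0 and N ∈ ℕ such that Σ_{k=-N}^{N} |f(t + kδ)| ≥ ε' for every t ∈ ℝ. -/

import Mathlib

/-!
Write `f(t) = ∑ₖ cₖ e^{-i t log k}`. The term `k = 1` is a constant of modulus `m`, and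
every other term has a nonzero frequency, so its integral over any interval is at most
`2 |cₖ| / log k`. Hence `|∫ₐᵇ f| ≥ m (b - a) - B`, so on a long interval `|f|` reaches
`m / 2`, and as `f` is Lipschitz, `|f| ≥ m / 4` on a window of fixed length around that
point. Every interval `[t, t + C]` thus contains such a window, and the points `t + kδ`,
`0 ≤ k ≤ ⌈C / δ⌉`, hit it.
-/

open MeasureTheory Set

/-- The exponential sum `f(t) = ∑_{k=1}^m (m choose k) (-1)^(m-k) k^(-β-it)`. -/
noncomputable def expSum (m : ℕ) (β : ℝ) (t : ℝ) : ℂ :=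
  ∑ k ∈ Finset.Icc 1 m,
    (m.choose k : ℂ) * (-1) ^ (m - k) * (k : ℂ) ^ (-(β : ℂ) - (t : ℂ) * Complex.I)

open Complex

noncomputable def trigPoly {ι : Type*} (s : Finset ι) (c : ι → ℂ) (ω : ι → ℝ) (t : ℝ) : ℂ :=
  ∑ i ∈ s, c i * exp (ω i * t * I)

lemma norm_integral_cexp_mul_I_le {ω : ℝ} (hω : ω ≠ 0) (a b : ℝ) :
    ‖∫ t in a..b, exp (ω * t * I)‖ ≤ 2 / |ω| := by
  have hωI : (ω : ℂ) * I ≠ 0 := mul_ne_zero (ofReal_ne_zero.mpr hω) I_ne_zero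
  have hnorm (x : ℝ) : ‖exp (ω * I * x)‖ = 1 := by
    rw [mul_right_comm, ← ofReal_mul]; exact norm_exp_ofReal_mul_I _
  simp_rw [mul_right_comm _ _ I]
  rw [integral_exp_mul_complex hωI, norm_div, norm_mul, norm_real, norm_I, mul_one,
    Real.norm_eq_abs]
  gcongr
  calc _ ≤ ‖exp (ω * I * b)‖ + ‖exp (ω * I * a)‖ := norm_sub_le _ _
    _ = 2 := by rw [hnorm, hnorm]; norm_num

section TrigPoly

variable {ι : Type*} (s : Finset ι) (c : ι → ℂ) (ω : ι → ℝ)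

lemma hasDerivAt_trigPoly (t : ℝ) :
    HasDerivAt (trigPoly s c ω) (∑ i ∈ s, c i * (ω i * I * exp (ω i * t * I))) t := by
  unfold trigPoly
  refine HasDerivAt.fun_sum fun i _ => HasDerivAt.const_mul _ ?_
  have h := (((hasDerivAt_id (t : ℂ)).const_mul (ω i : ℂ)).comp_ofReal.mul_const I).cexp
  simp only [mul_one, id_eq] at h
  rwa [mul_comm] at h

lemma lipschitzWith_trigPoly :
    LipschitzWith (∑ i ∈ s, ‖c i‖₊ * ‖ω i‖₊) (trigPoly s c ω) := by
  refine lipschitzWith_of_nnnorm_deriv_le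
    (fun t => (hasDerivAt_trigPoly s c ω t).differentiableAt) fun t => ?_
  rw [(hasDerivAt_trigPoly s c ω t).deriv]
  refine (nnnorm_sum_le _ _).trans (Finset.sum_le_sum fun i _ => le_of_eq ?_)
  rw [nnnorm_mul, nnnorm_mul, nnnorm_mul, nnnorm_I, mul_one, ← ofReal_mul,
    nnnorm_exp_ofReal_mul_I, mul_one, nnnorm_real]

lemma integral_trigPoly (a b : ℝ) :
    ∫ t in a..b, trigPoly s c ω t = ∑ i ∈ s, c i * ∫ t in a..b, exp (ω i * t * I) := by
  unfold trigPoly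
  rw [intervalIntegral.integral_finsetSum fun i _ =>
    (by fun_prop : Continuous _).intervalIntegrable _ _]
  simp only [intervalIntegral.integral_const_mul]

lemma norm_integral_trigPoly_ge [DecidableEq ι] {i₀ : ι} (hi₀ : i₀ ∈ s) (hω₀ : ω i₀ = 0)
    (hω : ∀ i ∈ s, i ≠ i₀ → ω i ≠ 0) {a b : ℝ} (hab : a ≤ b) :
    ‖c i₀‖ * (b - a) - ∑ i ∈ s.erase i₀, ‖c i‖ * (2 / |ω i|) ≤
      ‖∫ t in a..b, trigPoly s c ω t‖ := by
  have hmain : c i₀ * ∫ t in a..b, exp (ω i₀ * t * I) = c i₀ * (b - a : ℝ) := by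
    simp [hω₀]
  have htail : ‖∑ i ∈ s.erase i₀, c i * ∫ t in a..b, exp (ω i * t * I)‖ ≤
      ∑ i ∈ s.erase i₀, ‖c i‖ * (2 / |ω i|) := by
    refine (norm_sum_le _ _).trans (Finset.sum_le_sum fun i hi => ?_)
    obtain ⟨hi, his⟩ := Finset.mem_erase.mp hi
    rw [norm_mul]
    exact mul_le_mul_of_nonneg_left (norm_integral_cexp_mul_I_le (hω i his hi) a b)
      (norm_nonneg _)
  have hsplit := integral_trigPoly s c ω a b
  rw [← Finset.add_sum_erase s _ hi₀, hmain] at hsplit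
  have hnorm : ‖c i₀ * (b - a : ℝ)‖ = ‖c i₀‖ * (b - a) := by
    rw [norm_mul, norm_real, Real.norm_of_nonneg (sub_nonneg.mpr hab)]
  have htri := norm_le_add_norm_add (c i₀ * (b - a : ℝ))
    (∑ i ∈ s.erase i₀, c i * ∫ t in a..b, exp (ω i * t * I))
  rw [← hsplit, hnorm] at htri
  linarith

end TrigPoly

section LargeOnSubintervals

variable {E : Type*} [NormedAddCommGroup E]

def IsLargeOnSubintervals (g : ℝ → E) (C ε δ : ℝ) : Prop :=
  ∀ a b : ℝ, C ≤ b - a → ∃ c d : ℝ, a ≤ c ∧ d ≤ b ∧ δ ≤ d - c ∧ ∀ t ∈ Icc c d, ε ≤ ‖g t‖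

lemma exists_mem_Icc_le_norm_of_lt_norm_integral [NormedSpace ℝ E] {g : ℝ → E} {a b r : ℝ}
    (hab : a ≤ b) (h : r * (b - a) < ‖∫ t in a..b, g t‖) : ∃ t ∈ Icc a b, r ≤ ‖g t‖ := by
  by_contra! hlt
  have hle := intervalIntegral.norm_integral_le_of_norm_le_const (f := g) (C := r) fun t ht => by
    rw [uIoc_of_le hab] at ht
    exact (hlt t (Ioc_subset_Icc_self ht)).le
  rw [abs_of_nonneg (sub_nonneg.mpr hab)] at hle
  linarith

lemma LipschitzWith.exists_Icc_le_norm {g : ℝ → E} {K : NNReal} (hg : LipschitzWith K g)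
    {a b t₀ ε δ : ℝ} (ht₀ : t₀ ∈ Icc a b) (hgt₀ : 2 * ε ≤ ‖g t₀‖) (hδ : 0 ≤ δ)
    (hδab : δ ≤ b - a) (hKδ : K * δ ≤ ε) :
    ∃ c d : ℝ, a ≤ c ∧ d ≤ b ∧ δ ≤ d - c ∧ ∀ t ∈ Icc c d, ε ≤ ‖g t‖ := by
  have hnear : ∀ t, |t - t₀| ≤ δ → ε ≤ ‖g t‖ := fun t ht => by
    have hdist := hg.dist_le_mul t t₀
    rw [Real.dist_eq] at hdist
    have := mul_le_mul_of_nonneg_left ht K.coe_nonneg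
    linarith [norm_sub_norm_le (g t₀) (g t), dist_eq_norm' (g t) (g t₀)]
  -- The window `[c, c + δ]` is `[t₀, t₀ + δ]`, pushed left if it sticks out of `[a, b]`.
  set c := min t₀ (b - δ)
  refine ⟨c, c + δ, le_min ht₀.1 (by linarith), by linarith [min_le_right t₀ (b - δ)],
    by linarith, fun t ht => hnear t (abs_le.mpr ⟨?_, ?_⟩)⟩
  · linarith [ht.1, le_min (by linarith : t₀ - δ ≤ t₀) (by linarith [ht₀.2] : t₀ - δ ≤ b - δ)]
  · linarith [ht.2, min_le_left t₀ (b - δ)]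

lemma LipschitzWith.exists_isLargeOnSubintervals [NormedSpace ℝ E] {g : ℝ → E} {K : NNReal}
    (hg : LipschitzWith K g) {A B : ℝ} (hA : 0 < A)
    (hint : ∀ a b, a ≤ b → A * (b - a) - B ≤ ‖∫ t in a..b, g t‖) :
    ∃ C ε δ : ℝ, 0 < C ∧ 0 < ε ∧ 0 < δ ∧ IsLargeOnSubintervals g C ε δ := by
  have hB : 0 ≤ 2 * B / A := div_nonneg (by simpa using hint 0 0 le_rfl) hA.le
  set ε := A / 4 with hε_def
  set δ := ε / (K + 1)
  have hε : 0 < ε := by positivity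
  have hδ : 0 < δ := by positivity
  refine ⟨2 * B / A + δ, ε, δ, by positivity, hε, hδ, fun a b hab => ?_⟩
  have hlong : 2 * B < A * (b - a) := by
    rw [← div_lt_iff₀' hA]
    linarith
  obtain ⟨t₀, ht₀, hgt₀⟩ :=
    exists_mem_Icc_le_norm_of_lt_norm_integral (g := g) (a := a) (b := b) (r := 2 * ε)
      (by linarith) (by rw [hε_def]; linarith [hint a b (by linarith)])
  refine hg.exists_Icc_le_norm ht₀ hgt₀ hδ.le (by linarith) ?_
  rw [mul_div_assoc', div_le_iff₀ (by positivity)]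
  nlinarith [K.coe_nonneg]

lemma IsLargeOnSubintervals.le_sum_norm_shift {g : ℝ → E} {C ε δ : ℝ}
    (h : IsLargeOnSubintervals g C ε δ) (hδ : 0 < δ) (t : ℝ) :
    ε ≤ ∑ k ∈ Finset.Icc (-(⌈C / δ⌉₊ : ℤ)) ⌈C / δ⌉₊, ‖g (t + k * δ)‖ := by
  obtain ⟨c, d, htc, hdt, hcd, hlarge⟩ := h t (t + C) (by linarith)
  -- `k₀` is the first index with `t + k₀ δ ≥ c`; since `d - c ≥ δ` it does not overshoot `d`.
  set k₀ : ℤ := ⌈(c - t) / δ⌉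
  have hk₀_nonneg : 0 ≤ k₀ := Int.ceil_nonneg (div_nonneg (by linarith) hδ.le)
  have hk₀_le : k₀ ≤ ⌈C / δ⌉₊ := by
    rw [Int.ceil_le, Int.cast_natCast]
    exact (div_le_div_of_nonneg_right (by linarith) hδ.le).trans (Nat.le_ceil _)
  have hk₀_ge : c - t ≤ k₀ * δ := (div_le_iff₀ hδ).mp (Int.le_ceil _)
  have hk₀_lt : k₀ * δ < c - t + δ := by
    have := mul_lt_mul_of_pos_right (Int.ceil_lt_add_one ((c - t) / δ)) hδ
    rwa [add_mul, one_mul, div_mul_cancel₀ _ hδ.ne'] at this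
  calc ε ≤ ‖g (t + k₀ * δ)‖ := hlarge _ ⟨by linarith, by linarith⟩
    _ ≤ _ := Finset.single_le_sum (f := fun k : ℤ => ‖g (t + k * δ)‖) (fun _ _ => norm_nonneg _)
        (Finset.mem_Icc.mpr ⟨by omega, hk₀_le⟩)

end LargeOnSubintervals

lemma expSum_eq_trigPoly (m : ℕ) (β : ℝ) :
    expSum m β = trigPoly (Finset.Icc 1 m)
      (fun k => (m.choose k : ℂ) * (-1) ^ (m - k) * (k : ℂ) ^ (-(β : ℂ)))
      (fun k => -Real.log k) := by
  funext t
  unfold expSum trigPoly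
  refine Finset.sum_congr rfl fun k hk => ?_
  have hk0 : (k : ℂ) ≠ 0 := Nat.cast_ne_zero.mpr (by grind)
  rw [sub_eq_add_neg, cpow_add _ _ hk0, cpow_def_of_ne_zero hk0 (-(t * I)), ← natCast_log,
    ← mul_assoc]
  congr 2
  push_cast
  ring

theorem stmt_5 (m : ℕ) (hm : 1 ≤ m) (β : ℝ) :
    (∃ C ε δ : ℝ, 0 < C ∧ 0 < ε ∧ 0 < δ ∧
      ∀ a b : ℝ, C ≤ b - a → ∃ c d : ℝ, a ≤ c ∧ d ≤ b ∧ δ ≤ d - c ∧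
        ∀ t ∈ Icc c d, ε ≤ ‖expSum m β t‖) ∧
    (∃ ε' δ : ℝ, 0 < ε' ∧ 0 < δ ∧ ∃ N : ℕ, ∀ t : ℝ,
      ε' ≤ ∑ k ∈ Finset.Icc (-(N : ℤ)) (N : ℤ),
        ‖expSum m β (t + (k : ℝ) * δ)‖) := by
  set c : ℕ → ℂ := fun k => (m.choose k : ℂ) * (-1) ^ (m - k) * (k : ℂ) ^ (-(β : ℂ))
  have hc₁ : ‖c 1‖ = m := by simp [c]
  have h1 : 1 ∈ Finset.Icc 1 m := Finset.mem_Icc.mpr ⟨le_rfl, hm⟩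
  have hfreq : ∀ k ∈ Finset.Icc 1 m, k ≠ 1 → -Real.log k ≠ 0 := fun k hk hk1 =>
    neg_ne_zero.mpr (Real.log_ne_zero_of_pos_of_ne_one (by grind [Nat.cast_pos])
      (by exact_mod_cast hk1))
  rw [expSum_eq_trigPoly]
  obtain ⟨C, ε, δ, hC, hε, hδ, hlarge⟩ :=
    (lipschitzWith_trigPoly _ c _).exists_isLargeOnSubintervals (A := m)
      (by exact_mod_cast hm) fun a b hab => by
        simpa [hc₁] using norm_integral_trigPoly_ge _ c _ h1 (by simp) hfreq hab
  exact ⟨⟨C, ε, δ, hC, hε, hδ, hlarge⟩, ε, δ, hε, hδ, _, hlarge.le_sum_norm_shift hδ⟩
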